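/- Let x: U → ℝ³ be a frontal with tangent moving basis Ω = (w₁ w₂) and induced unit normal n, and suppose ξ = φn + a w₁ + b w₂ is an equiaffine transversal vector field (τ₁ = τ₂ = 0), with a, b: U → ℝ smooth and φ: U → ℝ∖{0} smooth. Then on U one has a·e_Ω + b·f₂Ω = −φ_{u₁} and a·f₁Ω + b·g_Ω = −φ_{u₂}; in particular, at every point where the matrix [[e_Ω, f₂Ω],[f₁Ω, g_Ω]] is invertible, (a,b)ᵀ = [[e_Ω, f₂Ω],[f₁Ω, g_Ω]]⁻¹ · (−φ_{u₁}, −φ_{u₂})ᵀ. -/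

import Mathlib

open Matrix Topology Filter

noncomputable section

/-- Vectors in ℝ³. -/
abbrev V3 : Type := Fin 3 → ℝ

/-- The Euclidean dot product on ℝ³. -/
def dot3 (v w : V3) : ℝ := v 0 * w 0 + v 1 * w 1 + v 2 * w 2

/-- The cross product on ℝ³. -/
def cross3 (v w : V3) : V3 :=
  ![v 1 * w 2 - v 2 * w 1, v 2 * w 0 - v 0 * w 2, v 0 * w 1 - v 1 * w 0]

/-- Partial derivative in the `u₁` direction. -/
def pd1 {E : Type*} [NormedAddCommGroup E] [NormedSpace ℝ E]
    (f : ℝ × ℝ → E) (q : ℝ × ℝ) : E := fderiv ℝ f q (1, 0)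

/-- Partial derivative in the `u₂` direction. -/
def pd2 {E : Type*} [NormedAddCommGroup E] [NormedSpace ℝ E]
    (f : ℝ × ℝ → E) (q : ℝ × ℝ) : E := fderiv ℝ f q (0, 1)

/-- The singular set `Σ(x)` of `x` on `U`. -/
def SingSet (x : ℝ × ℝ → V3) (U : Set (ℝ × ℝ)) : Set (ℝ × ℝ) :=
  {q ∈ U | ¬ LinearIndependent ℝ ![pd1 x q, pd2 x q]}

/-- `x` is a frontal on the open set `U`, with smooth unit normal field `n`. -/
def IsFrontal (x n : ℝ × ℝ → V3) (U : Set (ℝ × ℝ)) : Prop :=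
  IsOpen U ∧ ContDiffOn ℝ (⊤ : ℕ∞) x U ∧ ContDiffOn ℝ (⊤ : ℕ∞) n U ∧
  (∀ q ∈ U, dot3 (n q) (n q) = 1) ∧
  (∀ q ∈ U, dot3 (pd1 x q) (n q) = 0 ∧ dot3 (pd2 x q) (n q) = 0)

/-- `x` is proper: its singular set has empty interior. -/
def IsProper (x : ℝ × ℝ → V3) (U : Set (ℝ × ℝ)) : Prop :=
  interior (SingSet x U) = ∅

/-- `(w1 w2)` is a tangent moving basis of `x` on `U`. -/
def IsTMB (x w1 w2 : ℝ × ℝ → V3) (U : Set (ℝ × ℝ)) : Prop :=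
  ContDiffOn ℝ (⊤ : ℕ∞) w1 U ∧ ContDiffOn ℝ (⊤ : ℕ∞) w2 U ∧
  (∀ q ∈ U, LinearIndependent ℝ ![w1 q, w2 q]) ∧
  (∀ q ∈ U, pd1 x q ∈ Submodule.span ℝ {w1 q, w2 q} ∧
            pd2 x q ∈ Submodule.span ℝ {w1 q, w2 q})

/-- The unit normal induced by a tangent moving basis: `w₁ × w₂ / ‖w₁ × w₂‖`. -/
def inducedNormal (w1 w2 : ℝ × ℝ → V3) (q : ℝ × ℝ) : V3 :=
  (Real.sqrt (dot3 (cross3 (w1 q) (w2 q)) (cross3 (w1 q) (w2 q))))⁻¹ •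
    cross3 (w1 q) (w2 q)

/-- The matrix `I_Ω = Ωᵀ Ω`. -/
def IOmega (w1 w2 : ℝ × ℝ → V3) (q : ℝ × ℝ) : Matrix (Fin 2) (Fin 2) ℝ :=
  !![dot3 (w1 q) (w1 q), dot3 (w1 q) (w2 q);
     dot3 (w2 q) (w1 q), dot3 (w2 q) (w2 q)]

/-- The matrix `II_Ω`, with `(II_Ω)ᵢⱼ = ⟨(wᵢ)_{uⱼ}, n⟩` for the induced normal `n`. -/
def IIOmega (w1 w2 : ℝ × ℝ → V3) (q : ℝ × ℝ) : Matrix (Fin 2) (Fin 2) ℝ :=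
  !![dot3 (pd1 w1 q) (inducedNormal w1 w2 q), dot3 (pd2 w1 q) (inducedNormal w1 w2 q);
     dot3 (pd1 w2 q) (inducedNormal w1 w2 q), dot3 (pd2 w2 q) (inducedNormal w1 w2 q)]

/-- The Ω-relative curvature `K_Ω = det (−II_Ωᵀ I_Ω⁻¹)`. -/
def relK (w1 w2 : ℝ × ℝ → V3) (q : ℝ × ℝ) : ℝ :=
  (-(IIOmega w1 w2 q)ᵀ * (IOmega w1 w2 q)⁻¹).det

/-- The tangent plane at a regular point, `span{x_{u₁}, x_{u₂}}`. -/
def tangentSpan (x : ℝ × ℝ → V3) (q : ℝ × ℝ) : Submodule ℝ V3 :=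
  Submodule.span ℝ {pd1 x q, pd2 x q}

/-- The Gaussian curvature `K = (eg − f²)/(EG − F²)` w.r.t. the unit normal `n`. -/
def gaussK (x n : ℝ × ℝ → V3) (q : ℝ × ℝ) : ℝ :=
  (dot3 (pd1 (pd1 x) q) (n q) * dot3 (pd2 (pd2 x) q) (n q)
      - dot3 (pd2 (pd1 x) q) (n q) ^ 2) /
    (dot3 (pd1 x q) (pd1 x q) * dot3 (pd2 x q) (pd2 x q)
      - dot3 (pd1 x q) (pd2 x q) ^ 2)

/-- `ξ` is the usual Blaschke normal vector field of `x` on the (regular) set `R`: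
`⟨ξ, n⟩ = |K|^{1/4}`, its tangential part `W = ξ − ⟨ξ,n⟩n` is tangent, and `ξ` is
equiaffine (its partial derivatives are tangent), which encodes `II(W, X) = −X(|K|^{1/4})`. -/
def IsUsualBlaschkeOn (x n ξ : ℝ × ℝ → V3) (R : Set (ℝ × ℝ)) : Prop :=
  ∀ q ∈ R,
    dot3 (ξ q) (n q) = |gaussK x n q| ^ ((4 : ℝ)⁻¹) ∧
    (ξ q - dot3 (ξ q) (n q) • n q ∈ tangentSpan x q) ∧
    pd1 ξ q ∈ tangentSpan x q ∧ pd2 ξ q ∈ tangentSpan x q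

/-- `ξ` is the Blaschke vector field of the frontal `x`: a smooth extension to `U` of
the usual Blaschke vector field defined on the regular part `U ∖ Σ(x)`. -/
def IsBlaschkeField (x n ξ : ℝ × ℝ → V3) (U : Set (ℝ × ℝ)) : Prop :=
  ContDiffOn ℝ (⊤ : ℕ∞) ξ U ∧ IsUsualBlaschkeOn x n ξ (U \ SingSet x U)

/-- Entrywise partial derivative of a matrix-valued map, in the `u₁` direction. -/
def pdMat1 {m n : Type*} (M : ℝ × ℝ → Matrix m n ℝ) (q : ℝ × ℝ) : Matrix m n ℝ :=
  Matrix.of fun i j => pd1 (fun u => M u i j) q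

/-- Entrywise partial derivative of a matrix-valued map, in the `u₂` direction. -/
def pdMat2 {m n : Type*} (M : ℝ × ℝ → Matrix m n ℝ) (q : ℝ × ℝ) : Matrix m n ℝ :=
  Matrix.of fun i j => pd2 (fun u => M u i j) q

/-- Auxiliary lemmas -/
lemma dot3_add_left (v w z : V3) : dot3 (v + w) z = dot3 v z + dot3 w z := by
  simp [dot3]; ring

lemma dot3_smul_left (c : ℝ) (v z : V3) : dot3 (c • v) z = c * dot3 v z := by
  simp [dot3]; ring

lemma dot3_comm (v w : V3) : dot3 v w = dot3 w v := by
  simp [dot3]; ring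

lemma dot3_smul_right (c : ℝ) (v z : V3) : dot3 v (c • z) = c * dot3 v z := by
  simp [dot3]; ring

lemma dot3_w1n (w1 w2 : ℝ × ℝ → V3) (u : ℝ × ℝ) :
    dot3 (w1 u) (inducedNormal w1 w2 u) = 0 := by
  have h : dot3 (w1 u) (cross3 (w1 u) (w2 u)) = 0 := by
    simp [dot3, cross3]; ring
  simp only [inducedNormal]
  rw [dot3_smul_right, h]; ring

lemma dot3_w2n (w1 w2 : ℝ × ℝ → V3) (u : ℝ × ℝ) :
    dot3 (w2 u) (inducedNormal w1 w2 u) = 0 := by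
  have h : dot3 (w2 u) (cross3 (w1 u) (w2 u)) = 0 := by
    simp [dot3, cross3]; ring
  simp only [inducedNormal]
  rw [dot3_smul_right, h]; ring

lemma fderiv_dot3 {f g : ℝ × ℝ → V3} {q : ℝ × ℝ}
    (hf : DifferentiableAt ℝ f q) (hg : DifferentiableAt ℝ g q) (v : ℝ × ℝ) :
    fderiv ℝ (fun u => dot3 (f u) (g u)) q v
      = dot3 (fderiv ℝ f q v) (g q) + dot3 (f q) (fderiv ℝ g q v) := by
  have hfi : ∀ i : Fin 3, HasFDerivAt (fun u => f u i)
      ((ContinuousLinearMap.proj i).comp (fderiv ℝ f q)) q :=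
    fun i => by
      exact
        (ContinuousLinearMap.proj (R := ℝ) (φ := fun _ : Fin 3 => ℝ) i).hasFDerivAt.comp q
          hf.hasFDerivAt
  have hgi : ∀ i : Fin 3, HasFDerivAt (fun u => g u i)
      ((ContinuousLinearMap.proj i).comp (fderiv ℝ g q)) q :=
    fun i => by
      exact
        (ContinuousLinearMap.proj (R := ℝ) (φ := fun _ : Fin 3 => ℝ) i).hasFDerivAt.comp q
          hg.hasFDerivAt
  have H := (((hfi 0).mul (hgi 0)).add ((hfi 1).mul (hgi 1))).add ((hfi 2).mul (hgi 2))
  have hE : fderiv ℝ (fun u => dot3 (f u) (g u)) q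
      = fderiv ℝ (fun u => (f u 0 * g u 0 + f u 1 * g u 1) + f u 2 * g u 2) q := rfl
  rw [hE, HasFDerivAt.fderiv (f := fun u => (f u 0 * g u 0 + f u 1 * g u 1) + f u 2 * g u 2) H]
  simp [dot3]
  ring

example : True := trivial

lemma key_eq (U : Set (ℝ × ℝ)) (w1 w2 ξ : ℝ × ℝ → V3) (φ a b : ℝ × ℝ → ℝ)
    (hU : IsOpen U)
    (hn : ContDiffOn ℝ (⊤ : ℕ∞) (inducedNormal w1 w2) U)
    (hw1 : ContDiffOn ℝ (⊤ : ℕ∞) w1 U) (hw2 : ContDiffOn ℝ (⊤ : ℕ∞) w2 U)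
    (hξs : ContDiffOn ℝ (⊤ : ℕ∞) ξ U)
    (hnn : ∀ u ∈ U, dot3 (inducedNormal w1 w2 u) (inducedNormal w1 w2 u) = 1)
    (hξdef : ∀ u ∈ U, ξ u = φ u • inducedNormal w1 w2 u + (a u • w1 u + b u • w2 u))
    (q : ℝ × ℝ) (hq : q ∈ U) (v : ℝ × ℝ)
    (hξt : fderiv ℝ ξ q v ∈ Submodule.span ℝ {w1 q, w2 q}) :
    a q * dot3 (fderiv ℝ w1 q v) (inducedNormal w1 w2 q)
      + b q * dot3 (fderiv ℝ w2 q v) (inducedNormal w1 w2 q) = -(fderiv ℝ φ q v) := by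
  set n : ℝ × ℝ → V3 := inducedNormal w1 w2 with hnd
  have hUq : U ∈ 𝓝 q := hU.mem_nhds hq
  have hone : ((⊤ : ℕ∞) : WithTop ℕ∞) ≠ 0 := by simp
  have hnD : DifferentiableAt ℝ n q := (hn.contDiffAt hUq).differentiableAt hone
  have hw1D : DifferentiableAt ℝ w1 q := (hw1.contDiffAt hUq).differentiableAt hone
  have hw2D : DifferentiableAt ℝ w2 q := (hw2.contDiffAt hUq).differentiableAt hone
  have hξD : DifferentiableAt ℝ ξ q := (hξs.contDiffAt hUq).differentiableAt hone
  -- n·dn = 0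
  have hnn0 : dot3 (n q) (fderiv ℝ n q v) = 0 := by
    have hc : (fun u => dot3 (n u) (n u)) =ᶠ[𝓝 q] (fun _ => (1:ℝ)) := by
      filter_upwards [hUq] with u hu
      exact hnn u hu
    have h0 : fderiv ℝ (fun u => dot3 (n u) (n u)) q v = 0 := by
      rw [hc.fderiv_eq, fderiv_fun_const]; simp
    rw [fderiv_dot3 hnD hnD v] at h0
    rw [dot3_comm (fderiv ℝ n q v) (n q)] at h0
    linarith
  -- wᵢ·dn = -dwᵢ·n
  have hw1n : dot3 (w1 q) (fderiv ℝ n q v) = -(dot3 (fderiv ℝ w1 q v) (n q)) := by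
    have h0 : fderiv ℝ (fun u => dot3 (w1 u) (n u)) q v = 0 := by
      have : (fun u => dot3 (w1 u) (n u)) = fun _ => (0:ℝ) :=
        funext fun u => dot3_w1n w1 w2 u
      rw [this, fderiv_fun_const]; simp
    rw [fderiv_dot3 hw1D hnD v] at h0
    linarith
  have hw2n : dot3 (w2 q) (fderiv ℝ n q v) = -(dot3 (fderiv ℝ w2 q v) (n q)) := by
    have h0 : fderiv ℝ (fun u => dot3 (w2 u) (n u)) q v = 0 := by
      have : (fun u => dot3 (w2 u) (n u)) = fun _ => (0:ℝ) :=
        funext fun u => dot3_w2n w1 w2 u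
      rw [this, fderiv_fun_const]; simp
    rw [fderiv_dot3 hw2D hnD v] at h0
    linarith
  -- dξ·n = 0
  have hξn : dot3 (fderiv ℝ ξ q v) (n q) = 0 := by
    obtain ⟨α, β, hαβ⟩ := Submodule.mem_span_pair.mp hξt
    rw [← hαβ, dot3_add_left, dot3_smul_left, dot3_smul_left, dot3_w1n, dot3_w2n]
    ring
  -- φ = ξ·n near q
  have hφeq : φ =ᶠ[𝓝 q] (fun u => dot3 (ξ u) (n u)) := by
    filter_upwards [hUq] with u hu
    rw [hξdef u hu, dot3_add_left, dot3_add_left, dot3_smul_left, dot3_smul_left,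
      dot3_smul_left, hnn u hu, dot3_w1n, dot3_w2n]
    ring
  have hφd : fderiv ℝ φ q v
      = dot3 (fderiv ℝ ξ q v) (n q) + dot3 (ξ q) (fderiv ℝ n q v) := by
    rw [hφeq.fderiv_eq, fderiv_dot3 hξD hnD v]
  rw [hξdef q hq, dot3_add_left, dot3_add_left, dot3_smul_left, dot3_smul_left,
    dot3_smul_left, hξn, hnn0, hw1n, hw2n] at hφd
  linarith

/-- If `ξ = φn + a w₁ + b w₂` is an equiaffine transversal vector field
of the frontal `x` (τ₁ = τ₂ = 0, i.e. the derivatives of ξ are tangent), then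
`a e_Ω + b f₂Ω = −φ_{u₁}` and `a f₁Ω + b g_Ω = −φ_{u₂}` on `U`; in particular, wherever
`[[e_Ω, f₂Ω],[f₁Ω, g_Ω]]` is invertible, `(a,b)ᵀ` is given by its inverse applied to
`(−φ_{u₁}, −φ_{u₂})ᵀ`. -/
theorem statement4 (U : Set (ℝ × ℝ)) (x w1 w2 ξ : ℝ × ℝ → V3) (φ a b : ℝ × ℝ → ℝ)
    (hx : ContDiffOn ℝ (⊤ : ℕ∞) x U)
    (hfr : IsFrontal x (inducedNormal w1 w2) U)
    (hΩ : IsTMB x w1 w2 U)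
    (hφs : ContDiffOn ℝ (⊤ : ℕ∞) φ U) (has : ContDiffOn ℝ (⊤ : ℕ∞) a U) (hbs : ContDiffOn ℝ (⊤ : ℕ∞) b U)
    (hφ0 : ∀ q ∈ U, φ q ≠ 0)
    (hξdef : ∀ q ∈ U,
      ξ q = φ q • inducedNormal w1 w2 q + (a q • w1 q + b q • w2 q))
    (hξs : ContDiffOn ℝ (⊤ : ℕ∞) ξ U)
    (hξtrans : ∀ q ∈ U, ξ q ∉ Submodule.span ℝ {w1 q, w2 q})
    (hequiaffine : ∀ q ∈ U, pd1 ξ q ∈ Submodule.span ℝ {w1 q, w2 q} ∧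
                            pd2 ξ q ∈ Submodule.span ℝ {w1 q, w2 q}) :
    ∀ q ∈ U,
      (a q * dot3 (pd1 w1 q) (inducedNormal w1 w2 q)
        + b q * dot3 (pd1 w2 q) (inducedNormal w1 w2 q) = -(pd1 φ q)) ∧
      (a q * dot3 (pd2 w1 q) (inducedNormal w1 w2 q)
        + b q * dot3 (pd2 w2 q) (inducedNormal w1 w2 q) = -(pd2 φ q)) ∧
      ((!![dot3 (pd1 w1 q) (inducedNormal w1 w2 q), dot3 (pd1 w2 q) (inducedNormal w1 w2 q);
           dot3 (pd2 w1 q) (inducedNormal w1 w2 q), dot3 (pd2 w2 q) (inducedNormal w1 w2 q)]).det ≠ 0 →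
        ![a q, b q] =
          (!![dot3 (pd1 w1 q) (inducedNormal w1 w2 q), dot3 (pd1 w2 q) (inducedNormal w1 w2 q);
              dot3 (pd2 w1 q) (inducedNormal w1 w2 q), dot3 (pd2 w2 q) (inducedNormal w1 w2 q)])⁻¹
            *ᵥ ![-(pd1 φ q), -(pd2 φ q)]) := by
  intro q hq
  have hU : IsOpen U := hfr.1
  have hkey := fun (v : ℝ × ℝ) (hv : fderiv ℝ ξ q v ∈ Submodule.span ℝ {w1 q, w2 q}) =>
    key_eq U w1 w2 ξ φ a b hU hfr.2.2.1 hΩ.1 hΩ.2.1 hξs hfr.2.2.2.1 hξdef q hq v hv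
  have e1 : a q * dot3 (pd1 w1 q) (inducedNormal w1 w2 q)
      + b q * dot3 (pd1 w2 q) (inducedNormal w1 w2 q) = -(pd1 φ q) :=
    hkey (1, 0) (hequiaffine q hq).1
  have e2 : a q * dot3 (pd2 w1 q) (inducedNormal w1 w2 q)
      + b q * dot3 (pd2 w2 q) (inducedNormal w1 w2 q) = -(pd2 φ q) :=
    hkey (0, 1) (hequiaffine q hq).2
  refine ⟨e1, e2, fun hdet => ?_⟩
  set M := !![dot3 (pd1 w1 q) (inducedNormal w1 w2 q), dot3 (pd1 w2 q) (inducedNormal w1 w2 q);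
      dot3 (pd2 w1 q) (inducedNormal w1 w2 q), dot3 (pd2 w2 q) (inducedNormal w1 w2 q)] with hM
  have hMv : M *ᵥ ![a q, b q] = ![-(pd1 φ q), -(pd2 φ q)] := by
    funext i
    fin_cases i <;>
      simp [hM, Matrix.mulVec, dotProduct] <;>
      [linarith [e1]; linarith [e2]]
  rw [← hMv, Matrix.mulVec_mulVec, Matrix.nonsing_inv_mul _ (isUnit_iff_ne_zero.mpr hdet),
    Matrix.one_mulVec]

end
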